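/- Let ρ, σ be subnormalized positive semi-definite operators on a finite-dimensional Hilbert space with Tr(λρ) = Tr(λσ) = 1 for some λ ≥ 1. Then P(ρ,σ) ≤ P(λρ, λσ) ≤ sqrt(2λ)·P(ρ,σ), where P is the purified distance defined via the generalized fidelity. -/

import Mathlib

open Matrix Filter
open scoped ComplexOrder Classical Kronecker

variable {n : Type*} [Fintype n] [DecidableEq n]

/-- Square root of a positive semidefinite matrix (0 if not PSD). -/
noncomputable def msqrt (A : Matrix n n ℂ) : Matrix n n ℂ :=
  if h : A.PosSemidef then
    (h.1.eigenvectorUnitary : Matrix n n ℂ) * diagonal ((↑) ∘ (Real.sqrt ∘ h.1.eigenvalues)) *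
      (star h.1.eigenvectorUnitary : Matrix n n ℂ)
  else 0

/-- Trace norm ‖A‖₁ = Tr √(AᴴA). -/
noncomputable def traceNorm (A : Matrix n n ℂ) : ℝ :=
  ((msqrt (Aᴴ * A)).trace).re

/-- Fidelity F(ρ,σ) = ‖√ρ √σ‖₁. -/
noncomputable def fidelity (ρ σ : Matrix n n ℂ) : ℝ :=
  traceNorm (msqrt ρ * msqrt σ)

/-- Purified distance for normalized states. -/
noncomputable def purifiedDist (ρ σ : Matrix n n ℂ) : ℝ :=
  Real.sqrt (1 - (fidelity ρ σ) ^ 2)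

/-- Density operator predicate. -/
def IsDensity (ρ : Matrix n n ℂ) : Prop := ρ.PosSemidef ∧ ρ.trace = 1

/-- Subnormalized state predicate. -/
def IsSubnormalized (ρ : Matrix n n ℂ) : Prop := ρ.PosSemidef ∧ ρ.trace.re ≤ 1

/-- Generalized fidelity for subnormalized states. -/
noncomputable def genFidelity (ρ σ : Matrix n n ℂ) : ℝ :=
  traceNorm (msqrt ρ * msqrt σ) + Real.sqrt ((1 - ρ.trace.re) * (1 - σ.trace.re))

/-- Purified distance via the generalized fidelity. -/
noncomputable def purifiedDistG (ρ σ : Matrix n n ℂ) : ℝ :=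
  Real.sqrt (1 - (genFidelity ρ σ) ^ 2)

/-- Max-relative entropy (base 2). -/
noncomputable def Dmax (ρ σ : Matrix n n ℂ) : ℝ :=
  sInf {l : ℝ | ((2:ℝ) ^ l • σ - ρ).PosSemidef}

/-- Min-relative entropy (base 2). -/
noncomputable def Dmin (ρ σ : Matrix n n ℂ) : ℝ :=
  -Real.logb 2 ((fidelity ρ σ) ^ 2)

/-- ε-ball of subnormalized states around ρ in purified distance. -/
def epsBall (ε : ℝ) (ρ : Matrix n n ℂ) : Set (Matrix n n ℂ) :=
  {ρ' | IsSubnormalized ρ' ∧ purifiedDistG ρ ρ' ≤ ε}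

/-- Matrix logarithm via the hermitian functional calculus (0 if not Hermitian). -/
noncomputable def mlog (A : Matrix n n ℂ) : Matrix n n ℂ :=
  if h : A.IsHermitian then h.cfc Real.log else 0

/-- Quantum relative entropy D(ρ‖σ) = Tr ρ(log ρ − log σ). -/
noncomputable def relEnt (ρ σ : Matrix n n ℂ) : ℝ :=
  ((ρ * (mlog ρ - mlog σ)).trace).re

/-- Relative entropy variance V(ρ‖σ). -/
noncomputable def relVar (ρ σ : Matrix n n ℂ) : ℝ :=
  ((ρ * (mlog ρ - mlog σ) ^ 2).trace).re - (relEnt ρ σ) ^ 2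

/-- Varentropy V(A)_ρ = Tr(ρ (log ρ)²) − (Tr ρ log ρ)². -/
noncomputable def varentropy (ρ : Matrix n n ℂ) : ℝ :=
  ((ρ * (mlog ρ) ^ 2).trace).re - (((ρ * mlog ρ).trace).re) ^ 2

/-- Partial trace over the second (B) register. -/
noncomputable def ptraceB {A B : Type*} [Fintype A] [Fintype B]
    (M : Matrix (A × B) (A × B) ℂ) : Matrix A A ℂ :=
  Matrix.of fun a a' => ∑ b, M (a, b) (a', b)

/-- Partial trace over the first (A) register. -/
noncomputable def ptraceA {A B : Type*} [Fintype A] [Fintype B]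
    (M : Matrix (A × B) (A × B) ℂ) : Matrix B B ℂ :=
  Matrix.of fun b b' => ∑ a, M (a, b) (a, b')

/-! A positive multiple `l • ρ` has square root `√l • √ρ`, so the fidelity of the normalized pair is
`F := l‖√ρ√σ‖₁`, while for the pair of trace `1/l` the correction term adds `1 - 1/l`, giving the
generalized fidelity `1 - (1 - F)/l`. With `d = 1 - F`, the purified distances are `√(u(2-u))` with
`u = d` for the normalized pair and `u = d/l` for the original one, and the two bounds are elementary
inequalities in `d` and `l`. -/

lemma Real.sqrt_one_sub_sq_one_sub_div_le {x l : ℝ} (hx : 0 ≤ x) (hl : 1 ≤ l) :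
    √(1 - (1 - (1 - x) / l) ^ 2) ≤ √(1 - x ^ 2) := by
  rcases le_or_gt x 1 with hx1 | hx1
  · apply Real.sqrt_le_sqrt
    have hu : (1 - x) / l ≤ 1 - x := div_le_self (by linarith) hl
    have hu0 : 0 ≤ (1 - x) / l := div_nonneg (by linarith) (by linarith)
    nlinarith
  · have hu : 0 ≤ (x - 1) / l := div_nonneg (by linarith) (by linarith)
    have hy : 1 - (1 - x) / l = 1 + (x - 1) / l := by ring
    rw [hy, Real.sqrt_eq_zero'.mpr (by nlinarith)]
    positivity

lemma Real.sqrt_one_sub_sq_le_sqrt_two_mul_mul {x l : ℝ} (hx : 0 ≤ x) (hl : 1 ≤ l) :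
    √(1 - x ^ 2) ≤ √(2 * l) * √(1 - (1 - (1 - x) / l) ^ 2) := by
  rcases le_or_gt x 1 with hx1 | hx1
  · have hl0 : 0 < l := by linarith
    rw [← Real.sqrt_mul (by positivity)]
    apply Real.sqrt_le_sqrt
    have hexpand : 2 * l * (1 - (1 - (1 - x) / l) ^ 2) =
        4 * (1 - x) - 2 * (1 - x) * ((1 - x) / l) := by
      field_simp; ring
    have hu : (1 - x) / l ≤ 1 - x := div_le_self (by linarith) hl
    have hu0 : 0 ≤ (1 - x) / l := div_nonneg (by linarith) hl0.le
    rw [hexpand]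
    nlinarith
  · rw [Real.sqrt_eq_zero'.mpr (by nlinarith)]
    positivity

section

open scoped MatrixOrder

lemma Matrix.PosSemidef.real_smul {m : Type*} [Fintype m] {A : Matrix m m ℂ}
    (hA : A.PosSemidef) {c : ℝ} (hc : 0 ≤ c) : (c • A).PosSemidef := by
  rw [← algebraMap_smul ℂ c A]
  exact hA.smul (by simpa using hc)

lemma msqrt_eq_cfcSqrt {A : Matrix n n ℂ} (hA : A.PosSemidef) : msqrt A = CFC.sqrt A := by
  rw [msqrt, dif_pos hA, CFC.sqrt_eq_real_sqrt A (nonneg_iff_posSemidef.mpr hA),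
    cfcₙ_eq_cfc (hf := Real.continuous_sqrt.continuousOn) (hf0 := Real.sqrt_zero), hA.1.cfc_eq]
  simp [IsHermitian.cfc, Function.comp_def]

lemma msqrt_smul {A : Matrix n n ℂ} (hA : A.PosSemidef) {c : ℝ} (hc : 0 ≤ c) :
    msqrt (c • A) = √c • msqrt A := by
  rw [msqrt_eq_cfcSqrt (hA.real_smul hc), msqrt_eq_cfcSqrt hA]
  have hsqrt : (CFC.sqrt A).PosSemidef := nonneg_iff_posSemidef.mp (CFC.sqrt_nonneg A)
  refine CFC.sqrt_unique
    (hb := nonneg_iff_posSemidef.mpr (hsqrt.real_smul (Real.sqrt_nonneg c))) ?_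
  rw [smul_mul_smul_comm, CFC.sqrt_mul_sqrt_self A (nonneg_iff_posSemidef.mpr hA),
    Real.mul_self_sqrt hc]

lemma traceNorm_smul (A : Matrix n n ℂ) {c : ℝ} (hc : 0 ≤ c) :
    traceNorm (c • A) = c * traceNorm A := by
  have hsq : (c • A)ᴴ * (c • A) = (c * c) • (Aᴴ * A) := by
    rw [conjTranspose_smul, star_trivial, smul_mul_smul_comm]
  rw [traceNorm, traceNorm, hsq, msqrt_smul (posSemidef_conjTranspose_mul_self A)
    (mul_nonneg hc hc), Real.sqrt_mul_self hc, trace_smul, Complex.smul_re, smul_eq_mul]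

lemma traceNorm_nonneg (A : Matrix n n ℂ) : 0 ≤ traceNorm A := by
  rw [traceNorm, msqrt_eq_cfcSqrt (posSemidef_conjTranspose_mul_self A)]
  exact (Complex.le_def.mp (nonneg_iff_posSemidef.mp (CFC.sqrt_nonneg _)).trace_nonneg).1

end

lemma fidelity_nonneg (ρ σ : Matrix n n ℂ) : 0 ≤ fidelity ρ σ :=
  traceNorm_nonneg _

lemma fidelity_smul {ρ σ : Matrix n n ℂ} (hρ : ρ.PosSemidef) (hσ : σ.PosSemidef) {c : ℝ}
    (hc : 0 ≤ c) : fidelity (c • ρ) (c • σ) = c * fidelity ρ σ := by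
  rw [fidelity, msqrt_smul hρ hc, msqrt_smul hσ hc, smul_mul_smul_comm, Real.mul_self_sqrt hc,
    traceNorm_smul _ hc, fidelity]

lemma genFidelity_of_trace_re_eq {ρ σ : Matrix n n ℂ} {t : ℝ} (hρ : ρ.trace.re = t)
    (hσ : σ.trace.re = t) (ht : t ≤ 1) : genFidelity ρ σ = fidelity ρ σ + (1 - t) := by
  rw [genFidelity, hρ, hσ, Real.sqrt_mul_self (by linarith), fidelity]

lemma trace_re_real_smul {m : Type*} [Fintype m] (A : Matrix m m ℂ) (c : ℝ) :
    (c • A).trace.re = c * A.trace.re := by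
  rw [trace_smul, Complex.smul_re, smul_eq_mul]

theorem stmt_8 (ρ σ : Matrix n n ℂ) (hρ : ρ.PosSemidef) (hσ : σ.PosSemidef)
    (l : ℝ) (hl : 1 ≤ l) (h1 : l * ρ.trace.re = 1) (h2 : l * σ.trace.re = 1) :
    purifiedDistG ρ σ ≤ purifiedDistG (l • ρ) (l • σ) ∧
      purifiedDistG (l • ρ) (l • σ) ≤ Real.sqrt (2 * l) * purifiedDistG ρ σ := by
  have hl0 : 0 < l := by linarith
  set F := l * fidelity ρ σ with hF
  have hF0 : 0 ≤ F := mul_nonneg hl0.le (fidelity_nonneg ρ σ)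
  have hscaled : genFidelity (l • ρ) (l • σ) = F := by
    rw [genFidelity_of_trace_re_eq (t := 1) (by rw [trace_re_real_smul, h1])
      (by rw [trace_re_real_smul, h2]) le_rfl, fidelity_smul hρ hσ hl0.le, sub_self, add_zero]
  have hsub : genFidelity ρ σ = 1 - (1 - F) / l := by
    have htrace (A : Matrix n n ℂ) (hA : l * A.trace.re = 1) : A.trace.re = 1 / l := by
      field_simp; linarith
    rw [genFidelity_of_trace_re_eq (htrace ρ h1) (htrace σ h2) (div_le_one_of_le₀ hl hl0.le), hF]
    field_simp; ring
  rw [purifiedDistG, purifiedDistG, hscaled, hsub]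
  exact ⟨Real.sqrt_one_sub_sq_one_sub_div_le hF0 hl,
    Real.sqrt_one_sub_sq_le_sqrt_two_mul_mul hF0 hl⟩
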